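/- arXiv:2605.17764 — 3 statements merged into one kernel-verified Lean document; each statement's English description precedes it below -/
import Mathlib

section
/- Let b : ℕ → ℝ be a probability mass function with b(n) > 0 and ∑ b(n) = 1, λᵇ(n) = b(n+1)/b(n). Let F = {n₀ < ... < n_m} ⊆ {0, ..., q} with n_m = q, and φ : F → ℝ with φ(nᵢ) > 0. Define λ(n) = λᵇ(n)/φ(n)^[n∈F] for n ≤ q and λ(n) = λᵇ(n) for n > q. Then the stationary distribution p(0) = (1 + ∑_{i≥0} ∏_{j≤i} λ(j))⁻¹, p(n) = λ(0)⋯λ(n-1)·p(0) satisfies p(n) = f(n)·b(n)/z, where f(n) = ∏ᵢ φ(nᵢ)^{u(nᵢ, n)} with u(nᵢ, n) = 1 if n ≤ nᵢ and 0 otherwise, and z = 1 + ∑_{i=0}^m (∏_{j=i}^m φ(n_j) - 1)·∑_{k=n_{i-1}+1}^{nᵢ} b(k) (with n_{-1} = -1). -/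
/-!
The step weight `f` drops by exactly the factor `φᵢ` when `n` passes `nᵢ`, so
`f n = f (n + 1) * J n`, where `J n` is the factor dividing `λᵇ(n)`. Hence `λ(n) = w(n+1)/w(n)`
for `w = f · b`, the products `λ(0)⋯λ(n-1)` telescope to `w(n)/w(0)`, and `p` is `w` normalized.
The normalizer `∑ f b` equals `z` because `f - 1` vanishes beyond `q` and equals
`∏_{j ≥ i} φⱼ - 1` on the block `{nᵢ₋₁ + 1, …, nᵢ}`.
-/

open Finset

theorem Finset.prod_range_div_of_ne_zero {G₀ : Type*} [CommGroupWithZero G₀] {w : ℕ → G₀}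
    (hw : ∀ n, w n ≠ 0) (n : ℕ) : ∏ i ∈ range n, w (i + 1) / w i = w n / w 0 := by
  induction n with
  | zero => simp [hw 0]
  | succ n ih => rw [prod_range_succ, ih, div_mul_div_cancel₀' (hw n)]

theorem stationary_eq_div_of_hasSum {K : Type*} [Field K] [TopologicalSpace K]
    [IsTopologicalRing K] [T2Space K] {w lam p : ℕ → K} {Z : K}
    (hw : ∀ n, w n ≠ 0) (hZ : HasSum w Z) (hlam : ∀ n, lam n = w (n + 1) / w n)
    (hp0 : p 0 = (1 + ∑' i : ℕ, ∏ j ∈ range (i + 1), lam j)⁻¹)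
    (hpn : ∀ n, p n = (∏ j ∈ range n, lam j) * p 0) (n : ℕ) :
    p n = w n / Z := by
  have hprod : ∀ n, ∏ j ∈ range n, lam j = w n / w 0 := fun n => by
    simp only [hlam, prod_range_div_of_ne_zero hw]
  have htail : HasSum (fun i => ∏ j ∈ range (i + 1), lam j) (Z / w 0 - 1) := by
    simp only [hprod]
    simpa [div_self (hw 0)] using (hasSum_nat_add_iff' 1).mpr (hZ.div_const (w 0))
  rw [hpn, hprod, hp0, htail.tsum_eq, add_sub_cancel, inv_div, div_mul_div_cancel₀ (hw 0)]

namespace InflationDeflation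

def block (ns : ℕ → ℕ) (i : ℕ) : Finset ℕ :=
  Icc (if i = 0 then 0 else ns (i - 1) + 1) (ns i)

theorem sum_range_eq_sum_block {M : Type*} [AddCommMonoid M] {ns : ℕ → ℕ} {m : ℕ}
    (hmono : ∀ i < m, ns i < ns (i + 1)) (g : ℕ → M) :
    ∑ k ∈ range (ns m + 1), g k = ∑ i ∈ range (m + 1), ∑ k ∈ block ns i, g k := by
  induction m with
  | zero => simp [block, Nat.range_succ_eq_Icc_zero]
  | succ m ih =>
    rw [sum_range_succ (fun i => ∑ k ∈ block ns i, g k), ← ih fun i hi => hmono i (by omega),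
      ← sum_range_add_sum_Ico _ (Nat.add_le_add_right (hmono m m.lt_add_one).le 1),
      Ico_add_one_right_eq_Icc]
    simp [block]

section StepWeight

variable {M : Type*} [CommMonoid M] (ns : ℕ → ℕ) (φ : ℕ → M) (m : ℕ)

def stepWeight (n : ℕ) : M :=
  ∏ i ∈ range (m + 1), if n ≤ ns i then φ i else 1

def jumpFactor (n : ℕ) : M :=
  ∏ i ∈ range (m + 1), if ns i = n then φ i else 1

variable {ns φ m}

theorem stepWeight_eq_stepWeight_succ_mul_jumpFactor (n : ℕ) :
    stepWeight ns φ m n = stepWeight ns φ m (n + 1) * jumpFactor ns φ m n := by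
  rw [stepWeight, stepWeight, jumpFactor, ← prod_mul_distrib]
  refine prod_congr rfl fun i _ => ?_
  by_cases h : ns i = n
  · simp [h]
  · rw [if_neg h, mul_one]
    exact if_congr (by omega) rfl rfl

theorem jumpFactor_eq_one_of_lt {n : ℕ} (h : ∀ i ≤ m, ns i < n) : jumpFactor ns φ m n = 1 :=
  prod_eq_one fun i hi => if_neg (h i (Nat.lt_succ_iff.mp (mem_range.mp hi))).ne

theorem stepWeight_eq_one_of_lt {n : ℕ} (h : ∀ i ≤ m, ns i < n) : stepWeight ns φ m n = 1 :=
  prod_eq_one fun i hi => if_neg (h i (Nat.lt_succ_iff.mp (mem_range.mp hi))).not_ge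

theorem stepWeight_eq_prod_Icc_of_mem_block (hmono : ∀ i < m, ns i < ns (i + 1)) {i k : ℕ}
    (hi : i ≤ m) (hk : k ∈ block ns i) : stepWeight ns φ m k = ∏ j ∈ Icc i m, φ j := by
  have hns : MonotoneOn ns (Set.Iic m) := (strictMonoOn_Iic_of_lt_succ hmono).monotoneOn
  rw [block, mem_Icc] at hk
  rw [stepWeight, ← prod_range_mul_prod_Ico _ (by omega : i ≤ m + 1), Ico_add_one_right_eq_Icc,
    prod_eq_one, one_mul]
  · refine prod_congr rfl fun j hj => if_pos ?_
    rw [mem_Icc] at hj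
    exact hk.2.trans (hns (by simp; omega) (by simp; omega) hj.1)
  · intro j hj
    rw [mem_range] at hj
    rw [if_neg (by omega : i ≠ 0)] at hk
    have := hns (by simp; omega) (by simp; omega) (by omega : j ≤ i - 1)
    exact if_neg (by omega)

end StepWeight

theorem stepWeight_ne_zero {M₀ : Type*} [CommMonoidWithZero M₀] [NoZeroDivisors M₀]
    [Nontrivial M₀] {ns : ℕ → ℕ} {φ : ℕ → M₀} {m : ℕ} (hφ : ∀ i ≤ m, φ i ≠ 0) (n : ℕ) :
    stepWeight ns φ m n ≠ 0 :=
  prod_ne_zero_iff.mpr fun i hi => by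
    split_ifs
    exacts [hφ i (Nat.lt_succ_iff.mp (mem_range.mp hi)), one_ne_zero]

theorem stepWeight_mul_div_stepWeight_mul {K : Type*} [Field K] {ns : ℕ → ℕ} {φ : ℕ → K}
    {m : ℕ} (hφ : ∀ i ≤ m, φ i ≠ 0) (b : ℕ → K) (n : ℕ) :
    stepWeight ns φ m (n + 1) * b (n + 1) / (stepWeight ns φ m n * b n) =
      b (n + 1) / b n / jumpFactor ns φ m n := by
  rw [stepWeight_eq_stepWeight_succ_mul_jumpFactor n, mul_assoc,
    mul_div_mul_left _ _ (stepWeight_ne_zero hφ _), div_div, mul_comm (b n)]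

theorem hasSum_stepWeight_mul {R : Type*} [CommRing R] [TopologicalSpace R] [ContinuousAdd R]
    {ns : ℕ → ℕ} {φ : ℕ → R} {m : ℕ} (hmono : ∀ i < m, ns i < ns (i + 1))
    {b : ℕ → R} {B : R} (hb : HasSum b B) :
    HasSum (fun n => stepWeight ns φ m n * b n)
      (B + ∑ i ∈ range (m + 1), ((∏ j ∈ Icc i m, φ j) - 1) * ∑ k ∈ block ns i, b k) := by
  have hns : MonotoneOn ns (Set.Iic m) := (strictMonoOn_Iic_of_lt_succ hmono).monotoneOn
  have hexcess : HasSum (fun n => (stepWeight ns φ m n - 1) * b n)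
      (∑ i ∈ range (m + 1), ((∏ j ∈ Icc i m, φ j) - 1) * ∑ k ∈ block ns i, b k) := by
    have hsupp : ∀ n ∉ range (ns m + 1), (stepWeight ns φ m n - 1) * b n = 0 := fun n hn => by
      have hn : ns m < n := by simpa using hn
      rw [stepWeight_eq_one_of_lt fun i hi => (hns hi Set.self_mem_Iic hi).trans_lt hn, sub_self,
        zero_mul]
    have hsum : ∑ n ∈ range (ns m + 1), (stepWeight ns φ m n - 1) * b n =
        ∑ i ∈ range (m + 1), ((∏ j ∈ Icc i m, φ j) - 1) * ∑ k ∈ block ns i, b k := by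
      rw [sum_range_eq_sum_block hmono]
      refine sum_congr rfl fun i hi => ?_
      rw [mul_sum]
      refine sum_congr rfl fun k hk => ?_
      rw [stepWeight_eq_prod_Icc_of_mem_block hmono (Nat.lt_succ_iff.mp (mem_range.mp hi)) hk]
    exact hsum ▸ hasSum_sum_of_ne_finset_zero hsupp
  convert hb.add hexcess using 1
  funext n
  ring

end InflationDeflation

open InflationDeflation

/-- Type 2 inflation-deflation stationary model: dividing the base
birth-death-rate ratios at indices n₀ < ... < n_m = q by positive parameters
φᵢ yields the stationary distribution f(n)·b(n)/z with step weight f. -/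
theorem type2_stationary_form
    (b : ℕ → ℝ) (hb_pos : ∀ n, 0 < b n) (hb_sum : HasSum b 1)
    (lb : ℕ → ℝ) (hlb : ∀ n, lb n = b (n + 1) / b n)
    (q m : ℕ) (ns : ℕ → ℕ)
    (hmono : ∀ i, i < m → ns i < ns (i + 1))
    (hlast : ns m = q)
    (φ : ℕ → ℝ) (hφ : ∀ i, i ≤ m → 0 < φ i)
    (lam : ℕ → ℝ)
    (hlam_le : ∀ n, n ≤ q →
      lam n = lb n / (∏ i ∈ Finset.range (m + 1), if ns i = n then φ i else 1))
    (hlam_gt : ∀ n, q < n → lam n = lb n)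
    (p : ℕ → ℝ)
    (hp0 : p 0 = (1 + ∑' i : ℕ, ∏ j ∈ Finset.range (i + 1), lam j)⁻¹)
    (hpn : ∀ n, p n = (∏ j ∈ Finset.range n, lam j) * p 0)
    (f : ℕ → ℝ)
    (hf : ∀ n, f n = ∏ i ∈ Finset.range (m + 1), if n ≤ ns i then φ i else 1)
    (z : ℝ)
    (hz : z = 1 + ∑ i ∈ Finset.range (m + 1),
      ((∏ j ∈ Finset.Icc i m, φ j) - 1) *
        ∑ k ∈ Finset.Icc (if i = 0 then 0 else ns (i - 1) + 1) (ns i), b k) :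
    ∀ n, p n = f n * b n / z := by
  have hφ₀ : ∀ i ≤ m, φ i ≠ 0 := fun i hi => (hφ i hi).ne'
  have hns_le : ∀ i ≤ m, ns i ≤ q := fun i hi =>
    hlast ▸ (strictMonoOn_Iic_of_lt_succ hmono).monotoneOn hi Set.self_mem_Iic hi
  have hlam : ∀ n,
      lam n = stepWeight ns φ m (n + 1) * b (n + 1) / (stepWeight ns φ m n * b n) := by
    intro n
    rw [stepWeight_mul_div_stepWeight_mul hφ₀, ← hlb]
    rcases le_or_gt n q with hn | hn
    · exact hlam_le n hn
    · rw [hlam_gt n hn, jumpFactor_eq_one_of_lt fun i hi => (hns_le i hi).trans_lt hn, div_one]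
  have hw : HasSum (fun n => stepWeight ns φ m n * b n) z :=
    hz ▸ hasSum_stepWeight_mul hmono hb_sum
  intro n
  rw [hf n]
  exact stationary_eq_div_of_hasSum
    (fun n => mul_ne_zero (stepWeight_ne_zero hφ₀ n) (hb_pos n).ne') hw hlam hp0 hpn n
end

section
/- Let q ≥ 1 and λ > 0 with λ ≠ q, b(k) = λᵏe^{-λ}/k!, φ = 1 + (λ - q)/∑_{k=0}^{q-1}(q-k)b(k), and z = 1 + (φ-1)∑_{k=0}^{q}b(k). Define p(n) = φ^{u_q(n)}·b(n)/z. Then the variance of p equals q, i.e., ∑_{n} n²·p(n) - (∑_n n·p(n))² = q. In particular the distribution p has dispersion index (variance/mean) equal to 1 but is not a Poisson distribution. -/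
/-!
Write `D = ∑_{k<q} (q - k) b(k) > 0`, so that `φ - 1 = (λ - q) / D`. If `∑ f(n) b(n) = s`,
the tilted expectation of `f` equals `m` exactly when
`s - m + (φ - 1) ∑_{k≤q} (f(k) - m) b(k) = 0`.
For `f(n) = n`, `m = q` the finite sum is `-D`, which is how `φ` was chosen. For `f(n) = n²`,
`m = q² + q`, the Poisson recurrence `(k + 1) b(k + 1) = λ b(k)` turns the finite sum into
`-(λ + q + 1) D`, matching `λ² + λ - q² - q = (λ - q)(λ + q + 1)`.
The tilted law is not Poisson(μ): above `q` it is proportional to `b`, so the recurrence forces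
`μ = λ`, while its mean forces `μ = q`.
-/

open Finset Real

noncomputable def poissonWeight (lam : ℝ) (n : ℕ) : ℝ := lam ^ n * exp (-lam) / n.factorial

lemma poissonWeight_pos {lam : ℝ} (hlam : 0 < lam) (n : ℕ) : 0 < poissonWeight lam n := by
  unfold poissonWeight; positivity

lemma succ_mul_poissonWeight_succ (lam : ℝ) (n : ℕ) :
    (n + 1 : ℝ) * poissonWeight lam (n + 1) = lam * poissonWeight lam n := by
  simp only [poissonWeight, Nat.factorial_succ, Nat.cast_mul, Nat.cast_succ]
  field_simp
  ring

lemma hasSum_poissonWeight (lam : ℝ) : HasSum (poissonWeight lam) 1 := by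
  have h := (NormedSpace.expSeries_div_hasSum_exp lam).mul_right (exp (-lam))
  rw [← exp_eq_exp_ℝ, ← exp_add, add_neg_cancel, exp_zero] at h
  refine h.congr_fun fun n => ?_
  rw [poissonWeight, mul_div_right_comm]

section Recurrence

variable {g : ℕ → ℝ} {lam : ℝ}

lemma HasSum.natCast_mul_comp_sub_one (hg : ∀ n : ℕ, (n + 1 : ℝ) * g (n + 1) = lam * g n)
    {f : ℝ → ℝ} {s : ℝ} (h : HasSum (fun n : ℕ => f n * g n) s) :
    HasSum (fun n : ℕ => n * f (n - 1) * g n) (lam * s) := by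
  refine (hasSum_nat_add_iff' 1).1 ?_
  rw [sum_range_one, Nat.cast_zero, zero_mul, zero_mul, sub_zero]
  refine (h.mul_left lam).congr_fun fun n => ?_
  push_cast
  rw [add_sub_cancel_right, mul_right_comm, hg]
  ring

lemma sum_range_succ_natCast_mul_comp_sub_one
    (hg : ∀ n : ℕ, (n + 1 : ℝ) * g (n + 1) = lam * g n) (f : ℝ → ℝ) (q : ℕ) :
    ∑ k ∈ range (q + 1), k * f (k - 1) * g k = lam * ∑ k ∈ range q, f k * g k := by
  rw [sum_range_succ', mul_sum]
  simp only [Nat.cast_zero, zero_mul, add_zero]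
  refine sum_congr rfl fun n _ => ?_
  push_cast
  rw [add_sub_cancel_right, mul_right_comm, hg]
  ring

end Recurrence

lemma hasSum_natCast_mul_poissonWeight (lam : ℝ) :
    HasSum (fun n : ℕ => n * poissonWeight lam n) lam := by
  have h := HasSum.natCast_mul_comp_sub_one (succ_mul_poissonWeight_succ lam) (f := fun _ => 1)
    ((hasSum_poissonWeight lam).congr_fun fun n => one_mul _)
  simpa using h

lemma hasSum_natCast_sq_mul_poissonWeight (lam : ℝ) :
    HasSum (fun n : ℕ => (n : ℝ) ^ 2 * poissonWeight lam n) (lam ^ 2 + lam) := by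
  have h := HasSum.natCast_mul_comp_sub_one (succ_mul_poissonWeight_succ lam)
    (f := fun x => x + 1)
    (((hasSum_natCast_mul_poissonWeight lam).add (hasSum_poissonWeight lam)).congr_fun
      fun n => add_one_mul _ _)
  rw [mul_add_one, ← sq] at h
  exact h.congr_fun fun n => by ring

/-- The weights `b` multiplied by `φ` on `{n ≤ q}`; the normalisation is only correct when
`∑ b = 1`. -/
noncomputable def reweightLE (q : ℕ) (φ : ℝ) (b : ℕ → ℝ) (n : ℕ) : ℝ :=
  (if n ≤ q then φ else 1) * b n / (1 + (φ - 1) * ∑ k ∈ range (q + 1), b k)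

lemma HasSum.ite_le_mul {c : ℕ → ℝ} {s : ℝ} (hc : HasSum c s) (q : ℕ) (φ : ℝ) :
    HasSum (fun n => (if n ≤ q then φ else 1) * c n)
      (s + (φ - 1) * ∑ k ∈ range (q + 1), c k) := by
  have hfin : HasSum (fun n => if n ≤ q then c n else 0) (∑ k ∈ range (q + 1), c k) := by
    have hle : ∀ n ∈ range (q + 1), (if n ≤ q then c n else 0) = c n := fun n hn =>
      if_pos (Nat.lt_succ_iff.1 (mem_range.1 hn))
    rw [← sum_congr rfl hle]
    exact hasSum_sum_of_ne_finset_zero fun n hn => if_neg (by simpa [Nat.lt_succ_iff] using hn)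
  refine (hc.add (hfin.mul_left (φ - 1))).congr_fun fun n => ?_
  split_ifs <;> ring

lemma tsum_mul_reweightLE_eq {q : ℕ} {φ s m : ℝ} {b f : ℕ → ℝ}
    (hf : HasSum (fun n => f n * b n) s)
    (hz : 1 + (φ - 1) * ∑ k ∈ range (q + 1), b k ≠ 0)
    (h : s - m + (φ - 1) * ∑ k ∈ range (q + 1), (f k - m) * b k = 0) :
    ∑' n, f n * reweightLE q φ b n = m := by
  have hsum : HasSum (fun n => f n * reweightLE q φ b n)
      ((s + (φ - 1) * ∑ k ∈ range (q + 1), f k * b k) /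
        (1 + (φ - 1) * ∑ k ∈ range (q + 1), b k)) :=
    ((hf.ite_le_mul q φ).div_const _).congr_fun fun n => by rw [reweightLE]; ring
  rw [hsum.tsum_eq, div_eq_iff hz]
  simp only [sub_mul, sum_sub_distrib, ← mul_sum] at h
  linear_combination h

section Truncated

variable {g : ℕ → ℝ} {lam : ℝ}

lemma sum_range_succ_sub_mul (q : ℕ) :
    ∑ k ∈ range (q + 1), ((q : ℝ) - k) * g k = ∑ k ∈ range q, ((q : ℝ) - k) * g k := by
  rw [sum_range_succ, sub_self, zero_mul, add_zero]

lemma sum_range_succ_natCast_sub_mul (q : ℕ) :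
    ∑ k ∈ range (q + 1), ((k : ℝ) - q) * g k = -∑ k ∈ range q, ((q : ℝ) - k) * g k := by
  rw [← sum_range_succ_sub_mul, ← sum_neg_distrib]
  exact sum_congr rfl fun k _ => by ring

lemma sum_range_sub_mul_pos {q : ℕ} (hq : 0 < q) (hg : ∀ k < q, 0 < g k) :
    0 < ∑ k ∈ range q, ((q : ℝ) - k) * g k := by
  refine sum_pos (fun k hk => mul_pos ?_ (hg k (mem_range.1 hk))) ⟨0, mem_range.2 hq⟩
  exact sub_pos.2 (Nat.cast_lt.2 (mem_range.1 hk))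

lemma sum_range_sub_mul_add_mul_sum (hg : ∀ n : ℕ, (n + 1 : ℝ) * g (n + 1) = lam * g n)
    (q : ℕ) :
    ∑ k ∈ range q, ((q : ℝ) - k) * g k + (lam - q) * ∑ k ∈ range (q + 1), g k
      = lam * g q := by
  have h := sum_range_succ_natCast_mul_comp_sub_one hg (fun _ => 1) q
  simp only [mul_one, one_mul] at h
  calc ∑ k ∈ range q, ((q : ℝ) - k) * g k + (lam - q) * ∑ k ∈ range (q + 1), g k
      = lam * ∑ k ∈ range (q + 1), g k - ∑ k ∈ range (q + 1), k * g k := by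
        rw [← sum_range_succ_sub_mul]
        simp only [sub_mul, sum_sub_distrib, mul_sum]
        ring
    _ = lam * g q := by rw [h, sum_range_succ]; ring

lemma sum_range_succ_sq_sub_mul (hg : ∀ n : ℕ, (n + 1 : ℝ) * g (n + 1) = lam * g n)
    (q : ℕ) :
    ∑ k ∈ range (q + 1), ((k : ℝ) ^ 2 - (q ^ 2 + q)) * g k
      = -(lam + q + 1) * ∑ k ∈ range q, ((q : ℝ) - k) * g k := by
  calc ∑ k ∈ range (q + 1), ((k : ℝ) ^ 2 - (q ^ 2 + q)) * g k
      = -(∑ k ∈ range (q + 1), k * (q - (k - 1)) * g k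
          + (q + 1) * ∑ k ∈ range (q + 1), ((q : ℝ) - k) * g k) := by
        rw [mul_sum, ← sum_add_distrib, ← sum_neg_distrib]
        exact sum_congr rfl fun k _ => by ring
    _ = _ := by
        rw [sum_range_succ_natCast_mul_comp_sub_one hg (fun x => q - x), sum_range_succ_sub_mul]
        ring

end Truncated

lemma eq_of_reweightLE_poissonWeight_eq {q : ℕ} {φ lam μ : ℝ} (hμ : 0 < μ)
    (h : reweightLE q φ (poissonWeight lam) = poissonWeight μ) : lam = μ := by
  refine (mul_left_inj' (poissonWeight_pos hμ (q + 1)).ne').1 ?_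
  rw [← succ_mul_poissonWeight_succ μ, ← h, reweightLE, reweightLE, if_neg (by omega),
    if_neg (by omega), one_mul, one_mul, mul_div_assoc', mul_div_assoc',
    ← succ_mul_poissonWeight_succ lam]

/-- Type 2 Poisson model with F = {q} and the special choice of φ: the
variance equals q, so the distribution is equidispersed, yet it is not a
Poisson distribution. -/
theorem type2_poisson_variance_q
    (q : ℕ) (hq : 1 ≤ q) (lam : ℝ) (hlam : 0 < lam) (hne : lam ≠ q)
    (b : ℕ → ℝ) (hb : ∀ k, b k = lam ^ k * Real.exp (-lam) / k.factorial)
    (φ : ℝ)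
    (hφ : φ = 1 + (lam - q) / ∑ k ∈ Finset.range q, ((q : ℝ) - k) * b k)
    (z : ℝ) (hz : z = 1 + (φ - 1) * ∑ k ∈ Finset.range (q + 1), b k)
    (p : ℕ → ℝ)
    (hp : ∀ n, p n = (if n ≤ q then φ else 1) * b n / z) :
    (∑' n : ℕ, (n : ℝ) ^ 2 * p n) - (∑' n : ℕ, (n : ℝ) * p n) ^ 2 = q ∧
    ¬ ∃ μ : ℝ, 0 < μ ∧
      ∀ n : ℕ, p n = μ ^ n * Real.exp (-μ) / n.factorial := by
  obtain rfl : b = poissonWeight lam := funext hb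
  have hrec := succ_mul_poissonWeight_succ lam
  have hD : 0 < ∑ k ∈ range q, ((q : ℝ) - k) * poissonWeight lam k :=
    sum_range_sub_mul_pos hq fun k _ => poissonWeight_pos hlam k
  have hφ1 : φ - 1 = (lam - q) / ∑ k ∈ range q, ((q : ℝ) - k) * poissonWeight lam k := by
    rw [hφ, add_sub_cancel_left]
  have hz0 : 1 + (φ - 1) * ∑ k ∈ range (q + 1), poissonWeight lam k ≠ 0 := by
    rw [hφ1, div_mul_eq_mul_div, one_add_div hD.ne', sum_range_sub_mul_add_mul_sum hrec]
    exact div_ne_zero (mul_pos hlam (poissonWeight_pos hlam q)).ne' hD.ne'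
  have hpw : p = reweightLE q φ (poissonWeight lam) := funext fun n => by rw [hp, hz, reweightLE]
  have hmean : ∑' n : ℕ, (n : ℝ) * p n = q := by
    rw [hpw]
    refine tsum_mul_reweightLE_eq (hasSum_natCast_mul_poissonWeight lam) hz0 ?_
    rw [sum_range_succ_natCast_sub_mul, hφ1]
    field_simp
    ring
  have hsecond : ∑' n : ℕ, (n : ℝ) ^ 2 * p n = q ^ 2 + q := by
    rw [hpw]
    refine tsum_mul_reweightLE_eq (hasSum_natCast_sq_mul_poissonWeight lam) hz0 ?_
    rw [sum_range_succ_sq_sub_mul hrec, hφ1]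
    field_simp
    ring
  refine ⟨by rw [hmean, hsecond]; ring, ?_⟩
  rintro ⟨μ, hμ, hpμ⟩
  obtain rfl : p = poissonWeight μ := funext hpμ
  have hμq : μ = q := (hasSum_natCast_mul_poissonWeight μ).tsum_eq.symm.trans hmean
  exact hne ((eq_of_reweightLE_poissonWeight_eq hμ hpw.symm).trans hμq)
end

section
/- Let b : ℕ → ℝ be a probability distribution with mean μ_b and variance σ_b², F = {n₀, ..., n_m}, α : F → ℝ positive, z = 1 + ∑ᵢ (α(nᵢ)-1)b(nᵢ), and p(n) = α(n)^{1_F(n)}·b(n)/z with mean μ = ∑ n·p(n). Then the variance of p equals σ_b² - (μ - μ_b)² + (1/z)·∑_{i=0}^m (α(nᵢ) - 1)·b(nᵢ)·((nᵢ - μ_b)² - σ_b²), assuming b has finite second moment. -/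
/-!
Reweighting `b` at the finitely many points of `F` changes every `b`-moment by a finite
correction, so the second moment of `p` about `μb` is `(σb2 + ∑ k ∈ F, (α k - 1) (k - μb)² b k) / z`.
The variance of `p` is this minus `(μ - μb)²`, and `∑ k ∈ F, (α k - 1) b k = z - 1` turns it
into the stated formula.
-/

open Finset

section Reweighting

variable {ι : Type*} [DecidableEq ι] {F : Finset ι} {α : ι → ℝ}

theorem hasSum_ite_mem (F : Finset ι) (g : ι → ℝ) :
    HasSum (fun n => if n ∈ F then g n else 0) (∑ k ∈ F, g k) := by
  have h := hasSum_sum_of_ne_finset_zero (f := fun n => if n ∈ F then g n else 0) (s := F)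
    (L := .unconditional ι) fun n hn => if_neg hn
  rwa [sum_congr rfl fun k hk => if_pos hk] at h

theorem HasSum.ite_mem_mul {f : ι → ℝ} {s : ℝ} (hf : HasSum f s) :
    HasSum (fun n => (if n ∈ F then α n else 1) * f n) (s + ∑ k ∈ F, (α k - 1) * f k) := by
  convert hf.add (hasSum_ite_mem F fun k => (α k - 1) * f k) using 2 with n
  split_ifs <;> ring

theorem one_add_sum_ite_mem_pos {b : ι → ℝ} (hb_pos : ∀ n, 0 < b n) (hb : HasSum b 1)
    (hα : ∀ n ∈ F, 0 < α n) : 0 < 1 + ∑ k ∈ F, (α k - 1) * b k := by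
  obtain ⟨i⟩ : Nonempty ι := by
    by_contra h
    rw [not_nonempty_iff] at h
    exact one_ne_zero (hb.unique hasSum_empty)
  have hweight : ∀ n, 0 < (if n ∈ F then α n else 1) * b n := fun n =>
    mul_pos (by split_ifs with h; exacts [hα n h, one_pos]) (hb_pos n)
  exact hasSum_lt (fun n => (hweight n).le) (hweight i) hasSum_zero hb.ite_mem_mul

theorem HasSum.mul_of_eq_ite_mem_mul_div {b p : ι → ℝ} {z : ℝ}
    (hp : ∀ n, p n = (if n ∈ F then α n else 1) * b n / z) {g : ι → ℝ} {s : ℝ}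
    (h : HasSum (fun n => g n * b n) s) :
    HasSum (fun n => g n * p n) ((s + ∑ k ∈ F, (α k - 1) * (g k * b k)) / z) := by
  have hgp : (fun n => g n * p n) = fun n => (if n ∈ F then α n else 1) * (g n * b n) / z :=
    funext fun n => by rw [hp]; ring
  exact hgp ▸ h.ite_mem_mul.div_const z

end Reweighting

theorem HasSum.sq_mul_of_sub_sq_mul {ι : Type*} {w x : ι → ℝ} {m c v : ℝ} (hw : HasSum w 1)
    (hm : HasSum (fun n => x n * w n) m) (hv : HasSum (fun n => (x n - c) ^ 2 * w n) v) :
    HasSum (fun n => x n ^ 2 * w n) (v - (m - c) ^ 2 + m ^ 2) := by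
  convert hv.add ((hm.mul_left (2 * c)).sub (hw.mul_left (c ^ 2))) using 1
  · ext n; ring
  · ring

/-- Variance of the type 1 inflation-deflation model in terms of the base
mean μb and base variance σb². -/
theorem type1_variance
    (b : ℕ → ℝ) (hb_pos : ∀ n, 0 < b n) (hb_sum : HasSum b 1)
    (μb : ℝ) (hμb : HasSum (fun n : ℕ => (n : ℝ) * b n) μb)
    (σb2 : ℝ)
    (hσb2 : HasSum (fun n : ℕ => ((n : ℝ) - μb) ^ 2 * b n) σb2)
    (F : Finset ℕ) (α : ℕ → ℝ) (hα : ∀ n ∈ F, 0 < α n)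
    (z : ℝ) (hz : z = 1 + ∑ k ∈ F, (α k - 1) * b k)
    (p : ℕ → ℝ)
    (hp : ∀ n, p n = (if n ∈ F then α n else 1) * b n / z)
    (μ : ℝ) (hμ : μ = ∑' n : ℕ, (n : ℝ) * p n) :
    (∑' n : ℕ, (n : ℝ) ^ 2 * p n) - μ ^ 2 =
      σb2 - (μ - μb) ^ 2 +
        (1 / z) * ∑ k ∈ F, (α k - 1) * b k * (((k : ℝ) - μb) ^ 2 - σb2) := by
  have hz_pos : 0 < z := hz ▸ one_add_sum_ite_mem_pos hb_pos hb_sum hα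
  have hp_sum : HasSum p 1 := by
    have h := (hb_sum.mul_left 1).mul_of_eq_ite_mem_mul_div (g := fun _ => 1) hp
    simpa [← hz, hz_pos.ne'] using h
  have hμ_sum : HasSum (fun n : ℕ => (n : ℝ) * p n) μ :=
    hμ ▸ (hμb.mul_of_eq_ite_mem_mul_div hp).summable.hasSum
  have hvar := hσb2.mul_of_eq_ite_mem_mul_div hp
  have hsum_split : ∑ k ∈ F, (α k - 1) * b k * (((k : ℝ) - μb) ^ 2 - σb2) =
      ∑ k ∈ F, (α k - 1) * (((k : ℝ) - μb) ^ 2 * b k) - σb2 * (z - 1) := by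
    rw [hz, add_sub_cancel_left, mul_sum, ← sum_sub_distrib]
    exact sum_congr rfl fun k _ => by ring
  rw [(hp_sum.sq_mul_of_sub_sq_mul hμ_sum hvar).tsum_eq, hsum_split]
  field_simp
  ring
end
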